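/- arXiv:1405.5167 — 5 statements merged into one kernel-verified Lean document; each statement's English description precedes it below -/
import Mathlib

section
/- If there exists μ ∈ [0,1] with A^T Q A − μ Q negative semidefinite, then the set {x ∈ R^n : x^T Q x ≤ 1} is invariant under the map x ↦ A x, for any symmetric matrix Q (not necessarily positive definite). -/
open Matrix

lemma Matrix.dotProduct_transpose_mul_mul_mulVec {m k R : Type*} [Fintype m] [Fintype k]
    [CommSemiring R] (A : Matrix m k R) (Q : Matrix m m R) (x : k → R) :
    x ⬝ᵥ (Aᵀ * Q * A) *ᵥ x = (A *ᵥ x) ⬝ᵥ Q *ᵥ (A *ᵥ x) := by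
  rw [← mulVec_mulVec, ← mulVec_mulVec, dotProduct_mulVec, vecMul_transpose]

theorem quadratic_set_invariant_of_mu_general {n : ℕ} (A Q : Matrix (Fin n) (Fin n) ℝ)
    (h : ∃ μ : ℝ, 0 ≤ μ ∧ μ ≤ 1 ∧
        ∀ x : Fin n → ℝ, x ⬝ᵥ (Aᵀ * Q * A - μ • Q).mulVec x ≤ 0) :
    ∀ x : Fin n → ℝ, x ⬝ᵥ Q.mulVec x ≤ 1 →
      (A.mulVec x) ⬝ᵥ Q.mulVec (A.mulVec x) ≤ 1 := by
  obtain ⟨μ, hμ0, hμ1, hneg⟩ := h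
  intro x hx
  have hcontract : (A *ᵥ x) ⬝ᵥ Q *ᵥ (A *ᵥ x) ≤ μ * (x ⬝ᵥ Q *ᵥ x) := by
    have := hneg x
    rw [sub_mulVec, dotProduct_sub, smul_mulVec, dotProduct_smul, smul_eq_mul,
      dotProduct_transpose_mul_mul_mulVec] at this
    linarith
  -- `x ⬝ᵥ Q *ᵥ x` may be negative, and then `μ` scales it towards `0 ≤ 1`.
  calc (A *ᵥ x) ⬝ᵥ Q *ᵥ (A *ᵥ x) ≤ μ * (x ⬝ᵥ Q *ᵥ x) := hcontract
    _ ≤ 1 := by nlinarith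

theorem quadratic_set_invariant_of_mu {n : ℕ} (A Q : Matrix (Fin n) (Fin n) ℝ)
    (hQ : Q.IsSymm)
    (h : ∃ μ : ℝ, 0 ≤ μ ∧ μ ≤ 1 ∧
        ∀ x : Fin n → ℝ, x ⬝ᵥ (Aᵀ * Q * A - μ • Q).mulVec x ≤ 0) :
    ∀ x : Fin n → ℝ, x ⬝ᵥ Q.mulVec x ≤ 1 →
      (A.mulVec x) ⬝ᵥ Q.mulVec (A.mulVec x) ≤ 1 :=
  quadratic_set_invariant_of_mu_general A Q h
end

section
/- If (Ax)^T Q x ≤ 0 for all x on the boundary {x : x^T Q x = 1} of the ellipsoid, then A^T Q + Q A is negative semidefinite. -/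
/-! The function `x ↦ (A x)ᵀ Q x` is homogeneous of degree two, and every nonzero `x` is a
positive multiple of a point of the ellipsoid `xᵀ Q x = 1`, so the boundary hypothesis gives
`(A x)ᵀ Q x ≤ 0` everywhere. Since `Q` is symmetric, `xᵀ (Aᵀ Q + Q A) x = 2 (A x)ᵀ Q x`. -/

namespace Matrix

variable {ι R : Type*} [Fintype ι] [CommRing R]

theorem mulVec_smul_dotProduct_mulVec_smul (A B : Matrix ι ι R) (c : R) (x : ι → R) :
    A *ᵥ (c • x) ⬝ᵥ B *ᵥ (c • x) = c ^ 2 * (A *ᵥ x ⬝ᵥ B *ᵥ x) := by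
  rw [mulVec_smul, mulVec_smul, smul_dotProduct, dotProduct_smul, smul_eq_mul, smul_eq_mul]
  ring

theorem IsSymm.dotProduct_transpose_mul_add_mul_mulVec {Q : Matrix ι ι R} (hQ : Q.IsSymm)
    (A : Matrix ι ι R) (x : ι → R) :
    x ⬝ᵥ (Aᵀ * Q + Q * A) *ᵥ x = 2 * (A *ᵥ x ⬝ᵥ Q *ᵥ x) := by
  have hAQ : x ⬝ᵥ (Aᵀ * Q) *ᵥ x = A *ᵥ x ⬝ᵥ Q *ᵥ x := by
    rw [← mulVec_mulVec, dotProduct_mulVec, vecMul_transpose]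
  have hQA : x ⬝ᵥ (Q * A) *ᵥ x = A *ᵥ x ⬝ᵥ Q *ᵥ x := by
    rw [← mulVec_mulVec, dotProduct_mulVec, ← mulVec_transpose, hQ.eq, dotProduct_comm]
  rw [add_mulVec, dotProduct_add, hAQ, hQA]
  ring

theorem PosDef.nonpos_of_nonpos_on_unit_level_set {Q : Matrix ι ι ℝ} (hQ : Q.PosDef)
    {f : (ι → ℝ) → ℝ} (hf : ∀ (c : ℝ) x, f (c • x) = c ^ 2 * f x)
    (h : ∀ x, x ⬝ᵥ Q *ᵥ x = 1 → f x ≤ 0) (x : ι → ℝ) : f x ≤ 0 := by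
  rcases eq_or_ne x 0 with rfl | hx
  · simpa using (hf 0 0).le
  have hq : 0 < x ⬝ᵥ Q *ᵥ x := by simpa using hQ.dotProduct_mulVec_pos hx
  set c := (√(x ⬝ᵥ Q *ᵥ x))⁻¹
  have hc : 0 < c ^ 2 := by positivity
  have hcx : c • x ⬝ᵥ Q *ᵥ (c • x) = 1 := by
    rw [mulVec_smul, smul_dotProduct, dotProduct_smul, smul_eq_mul, smul_eq_mul, ← mul_assoc,
      ← sq, inv_pow, Real.sq_sqrt hq.le, inv_mul_cancel₀ hq.ne']
  have hfcx := h _ hcx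
  rw [hf] at hfcx
  exact nonpos_of_mul_nonpos_right hfcx hc

end Matrix

open Matrix

theorem lyapunov_nsd_of_boundary {n : ℕ} (A Q : Matrix (Fin n) (Fin n) ℝ)
    (hQ : Q.PosDef)
    (h : ∀ x : Fin n → ℝ, x ⬝ᵥ Q.mulVec x = 1 → (A.mulVec x) ⬝ᵥ Q.mulVec x ≤ 0) :
    ∀ x : Fin n → ℝ, x ⬝ᵥ (Aᵀ * Q + Q * A).mulVec x ≤ 0 := by
  intro x
  have hAQ : A *ᵥ x ⬝ᵥ Q *ᵥ x ≤ 0 :=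
    hQ.nonpos_of_nonpos_on_unit_level_set (mulVec_smul_dotProduct_mulVec_smul A Q) h x
  rw [(isHermitian_iff_isSymm.mp hQ.isHermitian).dotProduct_transpose_mul_add_mul_mulVec]
  linarith
end

section
/- The exponential e^{At} leaves the set {x : x^T Q x = 1} invariant for all t ≥ 0 and all x_0 with x_0^T Q x_0 = 1 if and only if the matrices Q̃_{k−1} = Σ_{i=0}^{k−1} (1/(i!(k−1−i)!)) (A^i)^T Q A^{k−i−1} vanish for all k ≥ 2. -/
/-! Write `C = AᵀQ + QA`; both sides of the equivalence say `C = 0`.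

Along a trajectory `x(t) = e^{tA}x`, the derivative of `x(t)ᵀQx(t)` is `x(t)ᵀCx(t)`. If the
ellipsoid is invariant for `t ≥ 0`, the one-sided derivative at `0` gives `xᵀCx = 0` on the
ellipsoid, hence for all `x` by homogeneity, hence `C = 0` since `C` is symmetric. Conversely
`C = 0` makes `x(t)ᵀQx(t)` constant.

With `L X = AᵀX + XA`, the commuting maps `X ↦ AᵀX` and `X ↦ XA` give, by the binomial theorem,
`Q̃_m = Lᵐ Q / m!`. So `Q̃_1 = C`, and `C = 0` kills every `Q̃_m` with `m ≥ 1`. -/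

open Matrix

namespace Matrix

variable {ι : Type*} [Fintype ι]

section CommSemiring

variable {R : Type*} [CommSemiring R]

theorem mulVec_dotProduct_mulVec_mulVec (M Q : Matrix ι ι R) (x : ι → R) :
    (M *ᵥ x) ⬝ᵥ Q *ᵥ (M *ᵥ x) = x ⬝ᵥ (Mᵀ * Q * M) *ᵥ x := by
  rw [← mulVec_mulVec, ← mulVec_mulVec, dotProduct_mulVec x, vecMul_transpose]

variable [DecidableEq ι]

def lyapunovMap (A : Matrix ι ι R) : Module.End R (Matrix ι ι R) :=
  LinearMap.mulLeft R Aᵀ + LinearMap.mulRight R A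

@[simp]
theorem lyapunovMap_apply (A Q : Matrix ι ι R) : lyapunovMap A Q = Aᵀ * Q + Q * A := rfl

theorem IsSymm.lyapunovMap {Q : Matrix ι ι R} (hQ : Q.IsSymm) (A : Matrix ι ι R) :
    (lyapunovMap A Q).IsSymm := by
  rw [IsSymm, Matrix.lyapunovMap_apply, transpose_add, transpose_mul, transpose_mul,
    transpose_transpose, hQ.eq, add_comm]

theorem lyapunovMap_pow_apply (A Q : Matrix ι ι R) (m : ℕ) :
    (lyapunovMap A ^ m) Q =
      ∑ i ∈ Finset.range (m + 1), m.choose i • ((A ^ i)ᵀ * Q * A ^ (m - i)) := by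
  rw [lyapunovMap, (LinearMap.commute_mulLeft_right Aᵀ A).add_pow, LinearMap.sum_apply]
  refine Finset.sum_congr rfl fun i _ => ?_
  simp only [Module.End.mul_apply, Module.End.natCast_apply, LinearMap.pow_mulLeft,
    LinearMap.pow_mulRight, LinearMap.mulLeft_apply, LinearMap.mulRight_apply, transpose_pow,
    smul_mul_assoc, mul_smul_comm, mul_assoc]

end CommSemiring

section Field

variable [DecidableEq ι] {K : Type*} [Field K] [CharZero K]

theorem sum_div_factorial_smul_eq (A Q : Matrix ι ι K) (m : ℕ) :
    ∑ i ∈ Finset.range (m + 1),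
        ((1 : K) / (Nat.factorial i * Nat.factorial (m - i))) • ((A ^ i)ᵀ * Q * A ^ (m - i)) =
      ((1 : K) / Nat.factorial m) • (lyapunovMap A ^ m) Q := by
  rw [lyapunovMap_pow_apply, Finset.smul_sum]
  refine Finset.sum_congr rfl fun i hi => ?_
  rw [← Nat.cast_smul_eq_nsmul K, smul_smul,
    Nat.cast_choose K (Nat.lt_succ_iff.mp (Finset.mem_range.mp hi))]
  have : (Nat.factorial m : K) ≠ 0 := Nat.cast_ne_zero.mpr m.factorial_ne_zero
  field_simp

theorem forall_sum_div_factorial_smul_eq_zero_iff (A Q : Matrix ι ι K) :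
    (∀ k : ℕ, 2 ≤ k →
      ∑ i ∈ Finset.range k,
        ((1 : K) / (Nat.factorial i * Nat.factorial (k - 1 - i))) •
          ((A ^ i)ᵀ * Q * A ^ (k - 1 - i)) = 0) ↔ lyapunovMap A Q = 0 := by
  constructor
  · intro h
    have h2 := h (1 + 1) le_rfl
    rwa [Nat.add_sub_cancel, sum_div_factorial_smul_eq, pow_one, Nat.factorial_one, Nat.cast_one,
      div_one, one_smul] at h2
  · intro h k hk
    obtain ⟨m, rfl⟩ : ∃ m, k = m + 1 + 1 := ⟨k - 2, by omega⟩
    rw [Nat.add_sub_cancel, sum_div_factorial_smul_eq, pow_succ, Module.End.mul_apply, h,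
      map_zero, smul_zero]

end Field

open scoped ComplexOrder in
theorem IsHermitian.eq_zero_of_forall_dotProduct_mulVec {𝕜 : Type*} [RCLike 𝕜]
    {C : Matrix ι ι 𝕜} (hC : C.IsHermitian) (h : ∀ x, star x ⬝ᵥ C *ᵥ x = 0) : C = 0 := by
  have hC' : C.PosSemidef := .of_dotProduct_mulVec_nonneg hC fun x => (h x).ge
  exact ext_iff_mulVec.mpr fun x => by
    rw [zero_mulVec, ← hC'.dotProduct_mulVec_zero_iff, h]

theorem PosDef.dotProduct_mulVec_eq_zero_of_forall {Q C : Matrix ι ι ℝ} (hQ : Q.PosDef)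
    (h : ∀ x, x ⬝ᵥ Q *ᵥ x = 1 → x ⬝ᵥ C *ᵥ x = 0) (y : ι → ℝ) : y ⬝ᵥ C *ᵥ y = 0 := by
  rcases eq_or_ne y 0 with rfl | hy
  · simp
  have hpos : 0 < y ⬝ᵥ Q *ᵥ y := by simpa using hQ.dotProduct_mulVec_pos hy
  set c := √(y ⬝ᵥ Q *ᵥ y)
  have hc : 0 < c := Real.sqrt_pos.mpr hpos
  have hc2 : c ^ 2 = y ⬝ᵥ Q *ᵥ y := Real.sq_sqrt hpos.le
  have := h (c⁻¹ • y) (by simp [mulVec_smul, ← hc2]; field_simp)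
  simpa [mulVec_smul, hc.ne'] using this

section Exp

variable [DecidableEq ι]

attribute [local instance] Matrix.linftyOpNormedRing Matrix.linftyOpNormedAlgebra

theorem hasDerivAt_transpose_exp_mul_mul_exp (A Q : Matrix ι ι ℝ) (t : ℝ) :
    HasDerivAt (fun u : ℝ => (NormedSpace.exp (u • A))ᵀ * Q * NormedSpace.exp (u • A))
      ((NormedSpace.exp (t • A))ᵀ * lyapunovMap A Q * NormedSpace.exp (t • A)) t := by
  have hT (u : ℝ) : (NormedSpace.exp (u • A))ᵀ = NormedSpace.exp (u • Aᵀ) := by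
    rw [← transpose_smul, Matrix.exp_transpose]
  simp only [hT]
  refine (((hasDerivAt_exp_smul_const Aᵀ t).mul_const Q).mul
    (hasDerivAt_exp_smul_const' A t)).congr_deriv ?_
  simp only [lyapunovMap_apply, mul_add, add_mul, mul_assoc]
  -- the two sides differ only in the multiplication instance (plain vs. normed matrix ring)
  rfl

theorem hasDerivAt_exp_mulVec_dotProduct (A Q : Matrix ι ι ℝ) (x : ι → ℝ) (t : ℝ) :
    HasDerivAt
      (fun u : ℝ => (NormedSpace.exp (u • A) *ᵥ x) ⬝ᵥ Q *ᵥ (NormedSpace.exp (u • A) *ᵥ x))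
      ((NormedSpace.exp (t • A) *ᵥ x) ⬝ᵥ lyapunovMap A Q *ᵥ (NormedSpace.exp (t • A) *ᵥ x)) t := by
  let φ : Matrix ι ι ℝ →L[ℝ] ℝ := LinearMap.toContinuousLinearMap
    { toFun M := x ⬝ᵥ M *ᵥ x
      map_add' M N := by simp [add_mulVec, dotProduct_add]
      map_smul' c M := by simp [smul_mulVec, dotProduct_smul] }
  simp only [mulVec_dotProduct_mulVec_mulVec]
  exact φ.hasFDerivAt.comp_hasDerivAt t (hasDerivAt_transpose_exp_mul_mul_exp A Q t)

theorem forall_exp_mulVec_dotProduct_eq_one_iff {A Q : Matrix ι ι ℝ} (hQ : Q.PosDef) :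
    (∀ t : ℝ, 0 ≤ t → ∀ x : ι → ℝ, x ⬝ᵥ Q *ᵥ x = 1 →
      (NormedSpace.exp (t • A) *ᵥ x) ⬝ᵥ Q *ᵥ (NormedSpace.exp (t • A) *ᵥ x) = 1) ↔
      lyapunovMap A Q = 0 := by
  constructor
  · intro h
    have hC : (lyapunovMap A Q).IsHermitian :=
      isHermitian_iff_isSymm.mpr ((isHermitian_iff_isSymm.mp hQ.isHermitian).lyapunovMap A)
    refine hC.eq_zero_of_forall_dotProduct_mulVec fun x => ?_
    rw [star_trivial]
    refine hQ.dotProduct_mulVec_eq_zero_of_forall (fun x hx => ?_) x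
    have hderiv := (hasDerivAt_exp_mulVec_dotProduct A Q x 0).hasDerivWithinAt (s := Set.Ici 0)
    have hconst : HasDerivWithinAt
        (fun u : ℝ => (NormedSpace.exp (u • A) *ᵥ x) ⬝ᵥ Q *ᵥ (NormedSpace.exp (u • A) *ᵥ x))
        0 (Set.Ici 0) 0 :=
      (hasDerivWithinAt_const 0 _ 1).congr_of_mem (fun u hu => h u hu x hx) Set.self_mem_Ici
    simpa using (uniqueDiffWithinAt_Ici 0).eq_deriv _ hderiv hconst
  · intro h t _ x hx
    have hderiv (u : ℝ) := hasDerivAt_exp_mulVec_dotProduct A Q x u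
    simp only [h, zero_mulVec, dotProduct_zero] at hderiv
    rw [is_const_of_deriv_eq_zero (fun u => (hderiv u).differentiableAt)
      (fun u => (hderiv u).deriv) t 0]
    simpa using hx

end Exp

end Matrix

theorem exp_boundary_invariant_iff {n : ℕ} (A Q : Matrix (Fin n) (Fin n) ℝ)
    (hQ : Q.PosDef) :
    (∀ t : ℝ, 0 ≤ t → ∀ x0 : Fin n → ℝ, x0 ⬝ᵥ Q.mulVec x0 = 1 →
        ((NormedSpace.exp (t • A)).mulVec x0) ⬝ᵥ
          Q.mulVec ((NormedSpace.exp (t • A)).mulVec x0) = 1) ↔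
      (∀ k : ℕ, 2 ≤ k →
        ∑ i ∈ Finset.range k,
          ((1 : ℝ) / (Nat.factorial i * Nat.factorial (k - 1 - i))) •
            ((A ^ i)ᵀ * Q * A ^ (k - 1 - i)) = 0) :=
  (Matrix.forall_exp_mulVec_dotProduct_eq_one_iff hQ).trans
    (Matrix.forall_sum_div_factorial_smul_eq_zero_iff A Q).symm
end

section
/- If A^T Q A − μ Q is negative semidefinite for some μ ≥ 0, then μ ≤ (u_n^T A^T Q A u_n)/λ_n and μ ≥ (u_i^T A^T Q A u_i)/λ_i for every i ∈ {1,...,n−1}. -/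
open Matrix

theorem dotProduct_mulVec_le_of_eigenvector {ι R : Type*} [Fintype ι] [CommRing R]
    [PartialOrder R] [IsOrderedRing R] {B Q : Matrix ι ι R} {μ c : R} {v : ι → R}
    (hv : Q *ᵥ v = c • v) (hunit : v ⬝ᵥ v = 1) (hle : v ⬝ᵥ (B - μ • Q) *ᵥ v ≤ 0) :
    v ⬝ᵥ B *ᵥ v ≤ μ * c := by
  rw [sub_mulVec, smul_mulVec, dotProduct_sub, dotProduct_smul, hv, dotProduct_smul, hunit,
    smul_eq_mul, smul_eq_mul, mul_one] at hle
  exact sub_nonpos.mp hle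

theorem mu_bounds_lorenz_general {n : ℕ} (A Q : Matrix (Fin (n + 1)) (Fin (n + 1)) ℝ)
    (lam : Fin (n + 1) → ℝ) (u : Fin (n + 1) → (Fin (n + 1) → ℝ))
    (horth : ∀ i j, u i ⬝ᵥ u j = if i = j then 1 else 0)
    (heig : ∀ i, Q.mulVec (u i) = lam i • u i)
    (hpos : ∀ i, i ≠ Fin.last n → 0 < lam i)
    (hneg : lam (Fin.last n) < 0)
    (μ : ℝ)
    (hnsd : ∀ x : Fin (n + 1) → ℝ, x ⬝ᵥ (Aᵀ * Q * A - μ • Q).mulVec x ≤ 0) :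
    μ ≤ (u (Fin.last n) ⬝ᵥ (Aᵀ * Q * A).mulVec (u (Fin.last n))) / lam (Fin.last n) ∧
      ∀ i, i ≠ Fin.last n →
        (u i ⬝ᵥ (Aᵀ * Q * A).mulVec (u i)) / lam i ≤ μ := by
  have hbound : ∀ i, u i ⬝ᵥ (Aᵀ * Q * A) *ᵥ u i ≤ μ * lam i := fun i =>
    dotProduct_mulVec_le_of_eigenvector (heig i) (by simpa using horth i i) (hnsd (u i))
  exact ⟨(le_div_iff_of_neg hneg).mpr (hbound _),
    fun i hi => (div_le_iff₀ (hpos i hi)).mpr (hbound i)⟩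

theorem mu_bounds_lorenz {n : ℕ} (A Q : Matrix (Fin (n + 1)) (Fin (n + 1)) ℝ)
    (hQ : Q.IsSymm) (lam : Fin (n + 1) → ℝ) (u : Fin (n + 1) → (Fin (n + 1) → ℝ))
    (horth : ∀ i j, u i ⬝ᵥ u j = if i = j then 1 else 0)
    (heig : ∀ i, Q.mulVec (u i) = lam i • u i)
    (hpos : ∀ i, i ≠ Fin.last n → 0 < lam i)
    (hneg : lam (Fin.last n) < 0)
    (μ : ℝ) (hμ : 0 ≤ μ)
    (hnsd : ∀ x : Fin (n + 1) → ℝ, x ⬝ᵥ (Aᵀ * Q * A - μ • Q).mulVec x ≤ 0) :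
    μ ≤ (u (Fin.last n) ⬝ᵥ (Aᵀ * Q * A).mulVec (u (Fin.last n))) / lam (Fin.last n) ∧
      ∀ i, i ≠ Fin.last n →
        (u i ⬝ᵥ (Aᵀ * Q * A).mulVec (u i)) / lam i ≤ μ :=
  mu_bounds_lorenz_general A Q lam u horth heig hpos hneg μ hnsd
end

section
/- If A^T Q + Q A − η Q is negative semidefinite for some η ∈ R, then max_{1≤i≤n−1} u_i^T (A^T + A) u_i ≤ η ≤ u_n^T (A^T + A) u_n. -/
/-! Evaluating the form of `Aᵀ Q + Q A - η Q` at a unit eigenvector `u` of `Q` with eigenvalue `λ`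
gives `λ (uᵀ (Aᵀ + A) u - η)`, which is `≤ 0` by hypothesis; the sign of `λ` then decides on
which side of `uᵀ (Aᵀ + A) u` the number `η` lies. -/

open Matrix

section
variable {R m : Type*} [CommRing R] [Fintype m]

theorem Matrix.IsSymm.dotProduct_mulVec_of_mulVec_eq_smul {Q : Matrix m m R} (hQ : Q.IsSymm)
    {v : m → R} {μ : R} (hv : Q *ᵥ v = μ • v) (w : m → R) :
    v ⬝ᵥ Q *ᵥ w = μ * (v ⬝ᵥ w) := by
  rw [dotProduct_mulVec, ← mulVec_transpose, hQ.eq, hv, smul_dotProduct, smul_eq_mul]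

theorem dotProduct_lyapunov_mulVec_of_mulVec_eq_smul (A : Matrix m m R) {Q : Matrix m m R}
    (hQ : Q.IsSymm) {v : m → R} {μ : R} (hv : Q *ᵥ v = μ • v) (η : R) :
    v ⬝ᵥ (Aᵀ * Q + Q * A - η • Q) *ᵥ v = μ * (v ⬝ᵥ (Aᵀ + A) *ᵥ v - η * (v ⬝ᵥ v)) := by
  simp only [sub_mulVec, add_mulVec, ← mulVec_mulVec, smul_mulVec, hv, mulVec_smul,
    dotProduct_sub, dotProduct_add, dotProduct_smul, smul_eq_mul,
    hQ.dotProduct_mulVec_of_mulVec_eq_smul hv]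
  ring

end

theorem eta_bounds_lorenz {n : ℕ} (A Q : Matrix (Fin (n + 1)) (Fin (n + 1)) ℝ)
    (hQ : Q.IsSymm) (lam : Fin (n + 1) → ℝ) (u : Fin (n + 1) → (Fin (n + 1) → ℝ))
    (horth : ∀ i j, u i ⬝ᵥ u j = if i = j then 1 else 0)
    (heig : ∀ i, Q.mulVec (u i) = lam i • u i)
    (hpos : ∀ i, i ≠ Fin.last n → 0 < lam i)
    (hneg : lam (Fin.last n) < 0)
    (η : ℝ)
    (hnsd : ∀ x : Fin (n + 1) → ℝ, x ⬝ᵥ (Aᵀ * Q + Q * A - η • Q).mulVec x ≤ 0) :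
    (∀ i, i ≠ Fin.last n → u i ⬝ᵥ (Aᵀ + A).mulVec (u i) ≤ η) ∧
      η ≤ u (Fin.last n) ⬝ᵥ (Aᵀ + A).mulVec (u (Fin.last n)) := by
  have key : ∀ i, lam i * (u i ⬝ᵥ (Aᵀ + A) *ᵥ u i - η) ≤ 0 := fun i => by
    simpa [dotProduct_lyapunov_mulVec_of_mulVec_eq_smul A hQ (heig i), horth] using hnsd (u i)
  exact ⟨fun i hi => sub_nonpos.mp (nonpos_of_mul_nonpos_right (key i) (hpos i hi)),
    sub_nonneg.mp (nonneg_of_mul_nonpos_right (key _) hneg)⟩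
end
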